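/- arXiv:1803.05717 — 3 statements merged into one kernel-verified Lean document; each statement's English description precedes it below -/
import Mathlib

section
/- Assume that d(i,ℓ+r) ≡ d(i,ℓ) + d(i+ℓ,r) + 1 (mod 2) for all i ∈ ℤ/m and all integers ℓ, r ≥ 1, and that d(i,m) is odd for every i ∈ ℤ/m. Then ∂_m ∘ ∂_m = 0 on I_m; that is, (I_m, d, ∂_m) — the internal differential graded algebra associated to an m-valent vertex of a Legendrian graph, whose generators record the Reeb chords at the vertex — is indeed a differential graded algebra. -/
open scoped BigOperators

noncomputable section

/-- The free unital associative `ℤ`-algebra on a set `G` of generators, modeled as the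
monoid algebra of the free monoid on `G`; the words (monomials) in the generators form a
`ℤ`-basis. -/
abbrev FreeZAlg (G : Type) : Type := MonoidAlgebra ℤ (FreeMonoid G)

/-- The basis element (word / monomial) of `FreeZAlg G` corresponding to `w : FreeMonoid G`. -/
def word {G : Type} (w : FreeMonoid G) : FreeZAlg G :=
  MonoidAlgebra.of ℤ (FreeMonoid G) w

/-- The degree of a word: the sum of the degrees of its letters. -/
def wdeg {G : Type} (δ : G → ℤ) (w : FreeMonoid G) : ℤ :=
  (List.map δ (FreeMonoid.toList w)).sum

/-- Index set for the generators `ρ_{i,ℓ}` of the internal algebra `I_m`: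
pairs of `i ∈ ℤ/m` and an integer `ℓ ≥ 1`. -/
abbrev IGen (m : ℕ) : Type := ZMod m × ℕ+

/-- The generator `ρ_{i,ℓ}` of `I_m`, as an element of the free algebra. -/
def rho {m : ℕ} (i : ZMod m) (l : ℕ+) : FreeZAlg (IGen m) :=
  word (FreeMonoid.of (i, l))

/-- The degree function on the generators of `I_m` induced by `d`. -/
def idegree {m : ℕ} (d : ZMod m → ℕ+ → ℤ) : IGen m → ℤ := fun g => d g.1 g.2

namespace InternalDGAAux

variable {G : Type}

lemma word_mul (x y : FreeMonoid G) : word (x * y) = word x * word y := map_mul _ _ _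
lemma word_one : word (1 : FreeMonoid G) = 1 := map_one (MonoidAlgebra.of ℤ (FreeMonoid G))
lemma wdeg_mul (δ : G → ℤ) (x y : FreeMonoid G) : wdeg δ (x * y) = wdeg δ x + wdeg δ y := by
  simp [wdeg, FreeMonoid.toList_mul]
lemma wdeg_of (δ : G → ℤ) (g : G) : wdeg δ (FreeMonoid.of g) = δ g := by
  simp [wdeg, FreeMonoid.toList_of]
lemma wdeg_one (δ : G → ℤ) : wdeg δ (1 : FreeMonoid G) = 0 := rfl

/-- `a` is a `ℤ`-linear combination of words whose degree is `≡ p (mod 2)`. -/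
def Hom (δ : G → ℤ) (p : ℤ) (a : FreeZAlg G) : Prop :=
  a ∈ Submodule.span ℤ {x : FreeZAlg G | ∃ w : FreeMonoid G, x = word w ∧ wdeg δ w ≡ p [ZMOD 2]}

lemma Hom.word {δ : G → ℤ} {p : ℤ} {w : FreeMonoid G} (h : wdeg δ w ≡ p [ZMOD 2]) :
    Hom δ p (word w) := Submodule.subset_span ⟨w, rfl, h⟩

lemma Hom.zero (δ : G → ℤ) (p : ℤ) : Hom δ p (0 : FreeZAlg G) := zero_mem _
lemma Hom.add {δ : G → ℤ} {p : ℤ} {a b : FreeZAlg G} (ha : Hom δ p a) (hb : Hom δ p b) :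
    Hom δ p (a + b) := add_mem ha hb
lemma Hom.smul {δ : G → ℤ} {p : ℤ} {a : FreeZAlg G} (z : ℤ) (ha : Hom δ p a) :
    Hom δ p (z • a) := Submodule.smul_mem _ z ha
lemma Hom.congr {δ : G → ℤ} {p q : ℤ} {a : FreeZAlg G} (hpq : p ≡ q [ZMOD 2])
    (ha : Hom δ p a) : Hom δ q a := by
  refine Submodule.span_mono ?_ ha
  rintro x ⟨w, rfl, hw⟩
  exact ⟨w, rfl, hw.trans hpq⟩

lemma Hom.mul {δ : G → ℤ} {p q : ℤ} {a b : FreeZAlg G} (ha : Hom δ p a) (hb : Hom δ q b) :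
    Hom δ (p + q) (a * b) := by
  have h := Submodule.mul_mem_mul ha hb
  rw [Submodule.span_mul_span] at h
  refine Submodule.span_mono ?_ h
  rintro x ⟨y, ⟨wy, rfl, hy⟩, z, ⟨wz, rfl, hz⟩, rfl⟩
  exact ⟨wy * wz, by rw [word_mul], by rw [wdeg_mul]; exact hy.add hz⟩

lemma Hom.sum {δ : G → ℤ} {p : ℤ} {s : Finset ℕ} {f : ℕ → FreeZAlg G}
    (h : ∀ j ∈ s, Hom δ p (f j)) : Hom δ p (∑ j ∈ s, f j) := Submodule.sum_mem _ h

/-- Graded Leibniz rule for a homogeneous left factor and arbitrary right factor. -/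
lemma leibniz {δ : G → ℤ} (D : FreeZAlg G →ₗ[ℤ] FreeZAlg G)
    (hDLeib : ∀ x y : FreeMonoid G,
      D (word (x * y)) =
        D (word x) * word y + (Int.negOnePow (wdeg δ x) : ℤ) • (word x * D (word y)))
    {p : ℤ} {a : FreeZAlg G} (ha : Hom δ p a) (b : FreeZAlg G) :
    D (a * b) = D a * b + (Int.negOnePow p : ℤ) • (a * D b) := by
  induction ha using Submodule.span_induction with
  | mem x hx =>
    obtain ⟨w, rfl, hw⟩ := hx
    have hsign : (Int.negOnePow (wdeg δ w) : ℤˣ) = Int.negOnePow p := by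
      rw [Int.negOnePow_eq_iff]
      obtain ⟨k, hk⟩ := hw.dvd
      exact ⟨-k, by omega⟩
    induction b using MonoidAlgebra.induction_on with
    | of y =>
      have := hDLeib w y
      rw [word_mul] at this
      rw [show MonoidAlgebra.of ℤ (FreeMonoid G) y = word y from rfl, this, hsign]
    | add b₁ b₂ h₁ h₂ =>
      rw [mul_add, map_add, h₁, h₂, map_add, mul_add, mul_add, smul_add]
      abel
    | smul r b hb =>
      rw [mul_smul_comm, map_smul, hb, map_smul, smul_add, mul_smul_comm, smul_comm r,
        mul_smul_comm]
  | zero => simp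
  | add x y _ _ hx hy =>
    rw [add_mul, map_add, hx, hy, map_add, add_mul (a := x), add_mul (a := D x), smul_add]
    abel
  | smul r x _ hx =>
    rw [smul_mul_assoc, map_smul, hx, map_smul, smul_add, smul_mul_assoc, smul_comm r,
      smul_mul_assoc]

section Internal

variable {m : ℕ} (hm : 0 < m) (d : ZMod m → ℕ+ → ℤ)
  (D : FreeZAlg (IGen m) →ₗ[ℤ] FreeZAlg (IGen m))

lemma toPNat'_add_eq {L j : ℕ} (h1 : 1 ≤ j) (h2 : j < L) :
    j.toPNat' + (L - j).toPNat' = L.toPNat' := by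
  have e1 := PNat.toPNat'_coe (show 0 < j by omega)
  have e2 := PNat.toPNat'_coe (show 0 < L - j by omega)
  have e3 := PNat.toPNat'_coe (show 0 < L by omega)
  rw [← PNat.coe_inj, PNat.add_coe]
  omega

lemma hom_D_rho
    (hd : ∀ (i : ZMod m) (l r : ℕ+),
      Int.ModEq 2 (d i (l + r)) (d i l + d (i + ((l : ℕ) : ZMod m)) r + 1))
    (hdm : ∀ i : ZMod m, Odd (d i ⟨m, hm⟩))
    (hDgen : ∀ (i : ZMod m) (l : ℕ+),
      D (rho i l) =
        (if (l : ℕ) = m then 1 else 0) +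
          ∑ j ∈ Finset.Ico 1 (l : ℕ),
            (Int.negOnePow (d i j.toPNat' - 1) : ℤ) •
              (rho i j.toPNat' * rho (i + (j : ZMod m)) ((l : ℕ) - j).toPNat'))
    (i : ZMod m) (l : ℕ+) :
    Hom (idegree d) (d i l - 1) (D (rho i l)) := by
  rw [hDgen]
  refine Hom.add ?_ (Hom.sum ?_)
  · by_cases h : (l : ℕ) = m
    · rw [if_pos h]
      have hl : l = ⟨m, hm⟩ := by
        apply PNat.coe_injective; simpa using h
      rw [← word_one]
      refine Hom.word ?_
      subst hl
      obtain ⟨k, hk⟩ := hdm i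
      show (0 : ℤ) % 2 = _ % 2
      omega
    · rw [if_neg h]; exact Hom.zero _ _
  · intro j hj
    simp only [Finset.mem_Ico] at hj
    refine Hom.smul _ ?_
    rw [show rho i j.toPNat' * rho (i + (j : ZMod m)) ((l : ℕ) - j).toPNat'
        = word (FreeMonoid.of (i, j.toPNat') *
            FreeMonoid.of (i + (j : ZMod m), ((l : ℕ) - j).toPNat')) from
      (word_mul _ _).symm]
    refine Hom.word ?_
    rw [wdeg_mul, wdeg_of, wdeg_of]
    have key := hd i j.toPNat' ((l : ℕ) - j).toPNat'
    have h1 : j.toPNat' + ((l : ℕ) - j).toPNat' = l := by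
      rw [toPNat'_add_eq hj.1 hj.2]
      exact PNat.coe_toPNat' l
    have h2 : ((j.toPNat' : ℕ) : ZMod m) = (j : ZMod m) := by
      rw [PNat.toPNat'_coe (show 0 < j by omega)]
    rw [h1, h2] at key
    show _ % 2 = _ % 2
    rw [Int.ModEq] at key
    simp only [idegree]
    omega

lemma hom_D_word
    (hd : ∀ (i : ZMod m) (l r : ℕ+),
      Int.ModEq 2 (d i (l + r)) (d i l + d (i + ((l : ℕ) : ZMod m)) r + 1))
    (hdm : ∀ i : ZMod m, Odd (d i ⟨m, hm⟩))
    (hD1 : D 1 = 0)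
    (hDgen : ∀ (i : ZMod m) (l : ℕ+),
      D (rho i l) =
        (if (l : ℕ) = m then 1 else 0) +
          ∑ j ∈ Finset.Ico 1 (l : ℕ),
            (Int.negOnePow (d i j.toPNat' - 1) : ℤ) •
              (rho i j.toPNat' * rho (i + (j : ZMod m)) ((l : ℕ) - j).toPNat'))
    (hDLeib : ∀ x y : FreeMonoid (IGen m),
      D (word (x * y)) =
        D (word x) * word y +
          (Int.negOnePow (wdeg (idegree d) x) : ℤ) • (word x * D (word y))) :
    ∀ w : FreeMonoid (IGen m), Hom (idegree d) (wdeg (idegree d) w - 1) (D (word w)) := by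
  intro w
  induction w using FreeMonoid.inductionOn' with
  | one => rw [word_one, hD1, wdeg_one]; exact Hom.zero _ _
  | of_mul g w ih =>
    rw [hDLeib (FreeMonoid.of g) w, wdeg_mul, wdeg_of]
    refine Hom.add ?_ (Hom.smul _ ?_)
    · have h1 : Hom (idegree d) (d g.1 g.2 - 1) (D (word (FreeMonoid.of g))) := by
        have := hom_D_rho hm d D hd hdm hDgen g.1 g.2
        rwa [show rho g.1 g.2 = word (FreeMonoid.of g) from rfl] at this
      have h2 : Hom (idegree d) (wdeg (idegree d) w) (word w) := Hom.word (Int.ModEq.refl _)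
      refine (h1.mul h2).congr ?_
      show _ % 2 = _ % 2
      simp only [idegree]
      ring_nf
    · have h1 : Hom (idegree d) (idegree d g) (word (FreeMonoid.of g)) :=
        Hom.word (by rw [wdeg_of])
      refine (h1.mul ih).congr ?_
      show _ % 2 = _ % 2
      simp only [idegree]
      ring_nf

lemma toPNat'_add_eq' {a b : ℕ} (ha : 1 ≤ a) (hb : 1 ≤ b) :
    a.toPNat' + b.toPNat' = (a + b).toPNat' := by
  have e1 := PNat.toPNat'_coe (show 0 < a by omega)
  have e2 := PNat.toPNat'_coe (show 0 < b by omega)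
  have e3 := PNat.toPNat'_coe (show 0 < a + b by omega)
  rw [← PNat.coe_inj, PNat.add_coe]
  omega

lemma DD_rho
    (hd : ∀ (i : ZMod m) (l r : ℕ+),
      Int.ModEq 2 (d i (l + r)) (d i l + d (i + ((l : ℕ) : ZMod m)) r + 1))
    (hdm : ∀ i : ZMod m, Odd (d i ⟨m, hm⟩))
    (hD1 : D 1 = 0)
    (hDgen : ∀ (i : ZMod m) (l : ℕ+),
      D (rho i l) =
        (if (l : ℕ) = m then 1 else 0) +
          ∑ j ∈ Finset.Ico 1 (l : ℕ),
            (Int.negOnePow (d i j.toPNat' - 1) : ℤ) •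
              (rho i j.toPNat' * rho (i + (j : ZMod m)) ((l : ℕ) - j).toPNat'))
    (hDLeib : ∀ x y : FreeMonoid (IGen m),
      D (word (x * y)) =
        D (word x) * word y +
          (Int.negOnePow (wdeg (idegree d) x) : ℤ) • (word x * D (word y)))
    (i : ZMod m) (l : ℕ+) :
    D (D (rho i l)) = 0 := by
  set L : ℕ := (l : ℕ) with hL
  rw [hDgen i l, map_add, map_sum]
  have hif : D (if L = m then (1 : FreeZAlg (IGen m)) else 0) = 0 := by
    split <;> simp [hD1]
  rw [hif, zero_add]
  -- abbreviations for the four families of terms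
  have key : ∀ j ∈ Finset.Ico 1 L,
      D ((Int.negOnePow (d i j.toPNat' - 1) : ℤ) •
          (rho i j.toPNat' * rho (i + (j : ZMod m)) (L - j).toPNat')) =
        ((if j = m then rho i (L - m).toPNat' else 0) +
          (if L - j = m then -(rho i j.toPNat') else 0)) +
        ((∑ k ∈ Finset.Ico 1 j,
            ((Int.negOnePow (d i j.toPNat' - 1) : ℤ) * (Int.negOnePow (d i k.toPNat' - 1) : ℤ)) •
              (rho i k.toPNat' * rho (i + (k : ZMod m)) (j - k).toPNat' *
                rho (i + (j : ZMod m)) (L - j).toPNat')) +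
          (∑ k ∈ Finset.Ico 1 (L - j),
            (-(Int.negOnePow (d (i + (j : ZMod m)) k.toPNat' - 1) : ℤ)) •
              (rho i j.toPNat' *
                (rho (i + (j : ZMod m)) k.toPNat' *
                  rho (i + (j : ZMod m) + (k : ZMod m)) (L - j - k).toPNat')))) := by
    intro j hj
    simp only [Finset.mem_Ico] at hj
    have hj1 : 0 < j := hj.1
    have hLj : 0 < L - j := by omega
    have cj : (j.toPNat' : ℕ) = j := PNat.toPNat'_coe hj1
    have cLj : ((L - j).toPNat' : ℕ) = L - j := PNat.toPNat'_coe hLj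
    have hDrr : D (rho i j.toPNat' * rho (i + (j : ZMod m)) (L - j).toPNat') =
        D (rho i j.toPNat') * rho (i + (j : ZMod m)) (L - j).toPNat' +
          (Int.negOnePow (d i j.toPNat') : ℤ) •
            (rho i j.toPNat' * D (rho (i + (j : ZMod m)) (L - j).toPNat')) := by
      have h := hDLeib (FreeMonoid.of (i, j.toPNat'))
        (FreeMonoid.of (i + (j : ZMod m), (L - j).toPNat'))
      rw [word_mul, wdeg_of] at h
      exact h
    rw [map_smul, hDrr, hDgen i j.toPNat', hDgen (i + (j : ZMod m)) ((L - j).toPNat'), cj, cLj]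
    have hA : (Int.negOnePow (d i j.toPNat' - 1) : ℤ) •
        ((if j = m then (1 : FreeZAlg (IGen m)) else 0) *
          rho (i + (j : ZMod m)) (L - j).toPNat') =
        (if j = m then rho i (L - m).toPNat' else 0) := by
      by_cases h : j = m
      · subst h
        rw [if_pos rfl, if_pos rfl, one_mul]
        have hmeq : (j.toPNat' : ℕ+) = ⟨j, hj1⟩ := by
          apply PNat.coe_injective; simpa using cj
        have heven : Even (d i j.toPNat' - 1) := by
          rw [hmeq]
          obtain ⟨k, hk⟩ := hdm i
          exact ⟨k, by omega⟩
        rw [Int.negOnePow_even _ heven, ZMod.natCast_self, add_zero]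
        simp
      · rw [if_neg h, if_neg h, zero_mul, smul_zero]
    have hC : (Int.negOnePow (d i j.toPNat' - 1) : ℤ) •
        ((Int.negOnePow (d i j.toPNat') : ℤ) •
          (rho i j.toPNat' * (if L - j = m then (1 : FreeZAlg (IGen m)) else 0))) =
        (if L - j = m then -(rho i j.toPNat') else 0) := by
      rw [smul_smul]
      have hcoef : (Int.negOnePow (d i j.toPNat' - 1) : ℤ) *
          (Int.negOnePow (d i j.toPNat') : ℤ) = -1 := by
        rw [← Units.val_mul, ← Int.negOnePow_add]
        rw [Int.negOnePow_odd _ ⟨d i j.toPNat' - 1, by ring⟩]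
        simp
      rw [hcoef]
      by_cases h : L - j = m
      · rw [if_pos h, if_pos h, mul_one, neg_one_smul]
      · rw [if_neg h, if_neg h, mul_zero, smul_zero]
    have hB : (Int.negOnePow (d i j.toPNat' - 1) : ℤ) •
        ((∑ k ∈ Finset.Ico 1 j,
            (Int.negOnePow (d i k.toPNat' - 1) : ℤ) •
              (rho i k.toPNat' * rho (i + (k : ZMod m)) (j - k).toPNat')) *
          rho (i + (j : ZMod m)) (L - j).toPNat') =
        ∑ k ∈ Finset.Ico 1 j,
            ((Int.negOnePow (d i j.toPNat' - 1) : ℤ) * (Int.negOnePow (d i k.toPNat' - 1) : ℤ)) •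
              (rho i k.toPNat' * rho (i + (k : ZMod m)) (j - k).toPNat' *
                rho (i + (j : ZMod m)) (L - j).toPNat') := by
      rw [Finset.sum_mul, Finset.smul_sum]
      refine Finset.sum_congr rfl fun k _ => ?_
      rw [smul_mul_assoc, smul_smul]
    have hE : (Int.negOnePow (d i j.toPNat' - 1) : ℤ) •
        ((Int.negOnePow (d i j.toPNat') : ℤ) •
          (rho i j.toPNat' *
            ∑ k ∈ Finset.Ico 1 (L - j),
              (Int.negOnePow (d (i + (j : ZMod m)) k.toPNat' - 1) : ℤ) •
                (rho (i + (j : ZMod m)) k.toPNat' *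
                  rho (i + (j : ZMod m) + (k : ZMod m)) (L - j - k).toPNat'))) =
        ∑ k ∈ Finset.Ico 1 (L - j),
            (-(Int.negOnePow (d (i + (j : ZMod m)) k.toPNat' - 1) : ℤ)) •
              (rho i j.toPNat' *
                (rho (i + (j : ZMod m)) k.toPNat' *
                  rho (i + (j : ZMod m) + (k : ZMod m)) (L - j - k).toPNat')) := by
      rw [Finset.mul_sum, Finset.smul_sum, Finset.smul_sum]
      refine Finset.sum_congr rfl fun k _ => ?_
      rw [mul_smul_comm, smul_smul, smul_smul]
      congr 1
      have hcoef : (Int.negOnePow (d i j.toPNat' - 1) : ℤ) *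
          (Int.negOnePow (d i j.toPNat') : ℤ) = -1 := by
        rw [← Units.val_mul, ← Int.negOnePow_add]
        rw [Int.negOnePow_odd _ ⟨d i j.toPNat' - 1, by ring⟩]
        simp
      rw [hcoef]
      ring
    simp only [add_mul, mul_add, smul_add]
    rw [hA, hB, hC, hE]
    abel
  rw [Finset.sum_congr rfl key, Finset.sum_add_distrib]
  have hAC : ∑ j ∈ Finset.Ico 1 L,
      ((if j = m then rho i (L - m).toPNat' else 0) +
        (if L - j = m then -(rho i j.toPNat') else 0)) = 0 := by
    rw [Finset.sum_add_distrib]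
    by_cases hmL : m < L
    · have h1 : ∑ j ∈ Finset.Ico 1 L, (if j = m then rho i (L - m).toPNat' else 0) =
          rho i (L - m).toPNat' := by
        rw [Finset.sum_ite_eq' (Finset.Ico 1 L) m (fun _ => rho i (L - m).toPNat'),
          if_pos (Finset.mem_Ico.mpr ⟨hm, hmL⟩)]
      have h2 : ∑ j ∈ Finset.Ico 1 L, (if L - j = m then -(rho i j.toPNat') else 0) =
          -(rho i (L - m).toPNat') := by
        have congr1 : ∀ j ∈ Finset.Ico 1 L,
            (if L - j = m then -(rho i j.toPNat') else 0) =
            (if j = L - m then -(rho i (L - m).toPNat') else 0) := by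
          intro j hj
          simp only [Finset.mem_Ico] at hj
          by_cases h : L - j = m
          · rw [if_pos h, if_pos (by omega), show j = L - m by omega]
          · rw [if_neg h, if_neg (by omega)]
        rw [Finset.sum_congr rfl congr1,
          Finset.sum_ite_eq' (Finset.Ico 1 L) (L - m) (fun _ => -(rho i (L - m).toPNat')),
          if_pos (Finset.mem_Ico.mpr ⟨by omega, by omega⟩)]
      rw [h1, h2, add_neg_cancel]
    · have h1 : ∑ j ∈ Finset.Ico 1 L, (if j = m then rho i (L - m).toPNat' else 0) = 0 :=
        Finset.sum_eq_zero fun j hj => by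
          simp only [Finset.mem_Ico] at hj; rw [if_neg (by omega)]
      have h2 : ∑ j ∈ Finset.Ico 1 L, (if L - j = m then -(rho i j.toPNat') else 0) = 0 :=
        Finset.sum_eq_zero fun j hj => by
          simp only [Finset.mem_Ico] at hj; rw [if_neg (by omega)]
      rw [h1, h2, add_zero]
  rw [hAC, zero_add]
  -- the triple-product terms
  set T : Finset (ℕ × ℕ) :=
    (Finset.Ico 1 L ×ˢ Finset.Ico 1 L).filter (fun p => p.1 + p.2 < L) with hT
  rw [Finset.sum_add_distrib]
  have hBT : ∑ j ∈ Finset.Ico 1 L, ∑ k ∈ Finset.Ico 1 j,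
      ((Int.negOnePow (d i j.toPNat' - 1) : ℤ) * (Int.negOnePow (d i k.toPNat' - 1) : ℤ)) •
        (rho i k.toPNat' * rho (i + (k : ZMod m)) (j - k).toPNat' *
          rho (i + (j : ZMod m)) (L - j).toPNat') =
      ∑ p ∈ T,
        ((Int.negOnePow (d i (p.1 + p.2).toPNat' - 1) : ℤ) *
            (Int.negOnePow (d i p.1.toPNat' - 1) : ℤ)) •
          (rho i p.1.toPNat' * rho (i + (p.1 : ZMod m)) (p.1 + p.2 - p.1).toPNat' *
            rho (i + ((p.1 + p.2 : ℕ) : ZMod m)) (L - (p.1 + p.2)).toPNat') := by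
    rw [Finset.sum_sigma']
    refine Finset.sum_nbij' (fun σ => (σ.2, σ.1 - σ.2)) (fun p => ⟨p.1 + p.2, p.1⟩)
      ?_ ?_ ?_ ?_ ?_
    · rintro ⟨j, k⟩ hσ
      simp only [Finset.mem_sigma, Finset.mem_Ico] at hσ
      simp only [hT, Finset.mem_filter, Finset.mem_product, Finset.mem_Ico]
      omega
    · rintro ⟨a, b⟩ hp
      simp only [hT, Finset.mem_filter, Finset.mem_product, Finset.mem_Ico] at hp
      simp only [Finset.mem_sigma, Finset.mem_Ico]
      omega
    · rintro ⟨j, k⟩ hσ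
      simp only [Finset.mem_sigma, Finset.mem_Ico] at hσ
      simp only [Sigma.mk.inj_iff]
      exact ⟨by omega, heq_of_eq rfl⟩
    · rintro ⟨a, b⟩ hp
      simp only [Prod.mk.injEq, true_and]
      omega
    · rintro ⟨j, k⟩ hσ
      simp only [Finset.mem_sigma, Finset.mem_Ico] at hσ
      have : k + (j - k) = j := by omega
      simp only [this]
  have hET : ∑ j ∈ Finset.Ico 1 L, ∑ k ∈ Finset.Ico 1 (L - j),
      (-(Int.negOnePow (d (i + (j : ZMod m)) k.toPNat' - 1) : ℤ)) •
        (rho i j.toPNat' *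
          (rho (i + (j : ZMod m)) k.toPNat' *
            rho (i + (j : ZMod m) + (k : ZMod m)) (L - j - k).toPNat')) =
      ∑ p ∈ T,
        (-(Int.negOnePow (d (i + (p.1 : ZMod m)) p.2.toPNat' - 1) : ℤ)) •
          (rho i p.1.toPNat' *
            (rho (i + (p.1 : ZMod m)) p.2.toPNat' *
              rho (i + (p.1 : ZMod m) + (p.2 : ZMod m)) (L - p.1 - p.2).toPNat')) := by
    rw [Finset.sum_sigma']
    refine Finset.sum_nbij' (fun σ => (σ.1, σ.2)) (fun p => ⟨p.1, p.2⟩)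
      ?_ ?_ ?_ ?_ ?_
    · rintro ⟨j, k⟩ hσ
      simp only [Finset.mem_sigma, Finset.mem_Ico] at hσ
      simp only [hT, Finset.mem_filter, Finset.mem_product, Finset.mem_Ico]
      omega
    · rintro ⟨a, b⟩ hp
      simp only [hT, Finset.mem_filter, Finset.mem_product, Finset.mem_Ico] at hp
      simp only [Finset.mem_sigma, Finset.mem_Ico]
      omega
    · rintro ⟨j, k⟩ _; rfl
    · rintro ⟨a, b⟩ _; rfl
    · rintro ⟨j, k⟩ _; rfl
  rw [hBT, hET, ← Finset.sum_add_distrib]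
  refine Finset.sum_eq_zero fun p hp => ?_
  simp only [hT, Finset.mem_filter, Finset.mem_product, Finset.mem_Ico] at hp
  obtain ⟨⟨⟨ha1, haL⟩, ⟨hb1, hbL⟩⟩, habL⟩ := hp
  obtain ⟨a, b⟩ := p
  simp only at ha1 haL hb1 hbL habL ⊢
  have e1 : a + b - a = b := by omega
  have e2 : L - (a + b) = L - a - b := by omega
  have e3 : ((a + b : ℕ) : ZMod m) = (a : ZMod m) + (b : ZMod m) := by push_cast; ring
  rw [e1, e2, e3, ← add_assoc, mul_assoc]
  have hcoef : (Int.negOnePow (d i (a + b).toPNat' - 1) : ℤ) *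
      (Int.negOnePow (d i a.toPNat' - 1) : ℤ) =
      (Int.negOnePow (d (i + (a : ZMod m)) b.toPNat' - 1) : ℤ) := by
    rw [← Units.val_mul, ← Int.negOnePow_add]
    congr 1
    rw [Int.negOnePow_eq_iff]
    have hmod := hd i a.toPNat' b.toPNat'
    rw [toPNat'_add_eq' ha1 hb1,
      show ((a.toPNat' : ℕ) : ZMod m) = (a : ZMod m) by
        rw [PNat.toPNat'_coe (by omega : 0 < a)]] at hmod
    rw [Int.ModEq] at hmod
    rw [Int.even_iff]
    omega
  rw [hcoef, neg_smul, add_neg_cancel]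

end Internal

end InternalDGAAux

open InternalDGAAux in
/-- Assume `d(i,ℓ+r) ≡ d(i,ℓ) + d(i+ℓ,r) + 1 (mod 2)` for all `i ∈ ℤ/m`,
`ℓ, r ≥ 1`, and `d(i,m)` odd for all `i`.  Then the map `∂_m` — the `ℤ`-linear map on the
free unital associative `ℤ`-algebra `I_m` on the generators `ρ_{i,ℓ}` determined by
`∂_m 1 = 0`, the stated value on generators, and the graded Leibniz rule on words —
satisfies `∂_m ∘ ∂_m = 0`, i.e. `(I_m, d, ∂_m)` is a differential graded algebra. -/
theorem internal_DGA_differential_squares_to_zero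
    (m : ℕ) (hm : 0 < m) (d : ZMod m → ℕ+ → ℤ)
    (hd : ∀ (i : ZMod m) (l r : ℕ+),
      Int.ModEq 2 (d i (l + r)) (d i l + d (i + ((l : ℕ) : ZMod m)) r + 1))
    (hdm : ∀ i : ZMod m, Odd (d i ⟨m, hm⟩))
    (D : FreeZAlg (IGen m) →ₗ[ℤ] FreeZAlg (IGen m))
    (hD1 : D 1 = 0)
    (hDgen : ∀ (i : ZMod m) (l : ℕ+),
      D (rho i l) =
        (if (l : ℕ) = m then 1 else 0) +
          ∑ j ∈ Finset.Ico 1 (l : ℕ),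
            (Int.negOnePow (d i j.toPNat' - 1) : ℤ) •
              (rho i j.toPNat' * rho (i + (j : ZMod m)) ((l : ℕ) - j).toPNat'))
    (hDLeib : ∀ x y : FreeMonoid (IGen m),
      D (word (x * y)) =
        D (word x) * word y +
          (Int.negOnePow (wdeg (idegree d) x) : ℤ) • (word x * D (word y))) :
    ∀ a : FreeZAlg (IGen m), D (D a) = 0 := by
  have key : ∀ w : FreeMonoid (IGen m), D (D (word w)) = 0 := by
    intro w
    induction w using FreeMonoid.inductionOn' with
    | one => rw [word_one, hD1, map_zero]
    | of_mul g w ih =>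
      rw [hDLeib (FreeMonoid.of g) w, map_add, map_smul]
      have hg : Hom (idegree d) (d g.1 g.2 - 1) (D (word (FreeMonoid.of g))) := by
        have := hom_D_rho hm d D hd hdm hDgen g.1 g.2
        rwa [show rho g.1 g.2 = word (FreeMonoid.of g) from rfl] at this
      have hg' : Hom (idegree d) (d g.1 g.2) (word (FreeMonoid.of g)) :=
        Hom.word (by rw [wdeg_of]; rfl)
      rw [leibniz D hDLeib hg (word w), leibniz D hDLeib hg' (D (word w))]
      have hDDg : D (D (word (FreeMonoid.of g))) = 0 := by
        have := DD_rho hm d D hd hdm hD1 hDgen hDLeib g.1 g.2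
        rwa [show rho g.1 g.2 = word (FreeMonoid.of g) from rfl] at this
      rw [hDDg, ih, zero_mul, zero_add, mul_zero, smul_zero, add_zero, wdeg_of]
      show (Int.negOnePow (d g.1 g.2 - 1) : ℤ) • _ +
        (Int.negOnePow (idegree d g) : ℤ) • _ = 0
      rw [show idegree d g = d g.1 g.2 from rfl, ← add_smul]
      convert zero_smul ℤ _
      have h := Int.negOnePow_succ (d g.1 g.2 - 1)
      rw [sub_add_cancel] at h
      rw [h, Units.val_neg]
      ring
  intro a
  induction a using MonoidAlgebra.induction_on with
  | of w => exact key w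
  | add a b ha hb => rw [map_add, map_add, ha, hb, add_zero]
  | smul r a ha => rw [map_smul, map_smul, ha, smul_zero]
end
end

section
/- Assume that d(i,ℓ+r) ≡ d(i,ℓ) + d(i+ℓ,r) + 1 (mod 2) for all i ∈ ℤ/m and all integers ℓ, r ≥ 1, and that d(i,m) is odd for every i ∈ ℤ/m. Let π^+ : F_m^+ → I_m be the unital ℤ-algebra homomorphism with π^+(ρ̄_{i,ℓ}) = ρ_{i,ℓ} and π^+(c̄_i) = 0 for all i. Then ∂̄_m ∘ p^{𝔡+} = p^{𝔡+} ∘ ∂_m and ∂_m ∘ π^+ = π^+ ∘ ∂̄_m (so p^{𝔡+} and π^+ are morphisms of differential graded algebras, p^{𝔡+} preserving degrees), and π^+ ∘ p^{𝔡+} = id on I_m. -/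
open scoped BigOperators

noncomputable section

/-- Index set for the generators of `F_m^+`: the generators `ρ̄_{i,ℓ}` (`Sum.inl`)
together with the generators `c̄_1, …, c̄_m` (`Sum.inr k` encodes `c̄_{k+1}`, `k : Fin m`). -/
abbrev FGen (m : ℕ) : Type := IGen m ⊕ Fin m

/-- The generator `ρ̄_{i,ℓ}` of `F_m^+`. -/
def rhoBar {m : ℕ} (i : ZMod m) (l : ℕ+) : FreeZAlg (FGen m) :=
  word (FreeMonoid.of (Sum.inl (i, l)))

/-- The generator `c̄_{k+1}` of `F_m^+` (0-based index `k : Fin m`). -/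
def cBar {m : ℕ} (k : Fin m) : FreeZAlg (FGen m) :=
  word (FreeMonoid.of (Sum.inr k))

/-- The degree function on the generators of `F_m^+`:
`deg ρ̄_{i,ℓ} = d i ℓ`, `deg c̄_1 = 𝔡` and `deg c̄_k = 𝔡 + d 1 (k-1) + 1` for `1 < k ≤ m`. -/
def fdegree {m : ℕ} (d : ZMod m → ℕ+ → ℤ) (dd : ℤ) : FGen m → ℤ
  | Sum.inl g => d g.1 g.2
  | Sum.inr k => if (k : ℕ) = 0 then dd else dd + d 1 ((k : ℕ)).toPNat' + 1

/-- The finite set of words appearing (with nonzero coefficient) in an element of the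
free algebra. -/
def supp {G : Type} (a : FreeZAlg G) : Finset (FreeMonoid G) := Finsupp.support a.coeff


section Aux

variable {G H : Type}

lemma word_mul (x y : FreeMonoid G) : word (x * y) = word x * word y :=
  map_mul (MonoidAlgebra.of ℤ (FreeMonoid G)) x y

lemma word_one : (word (1 : FreeMonoid G)) = 1 :=
  map_one (MonoidAlgebra.of ℤ (FreeMonoid G))

lemma word_eq_single (u : FreeMonoid G) :
    word u = MonoidAlgebra.single u (1 : ℤ) := rfl

lemma wdeg_of (δ : G → ℤ) (g : G) : wdeg δ (FreeMonoid.of g) = δ g := by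
  simp [wdeg]

end Aux

/-- Under the parity assumptions on `d`, the unital algebra morphisms
`p^{𝔡+} : I_m → F_m^+` (with `p^{𝔡+}(ρ_{i,ℓ}) = ρ̄_{i,ℓ}`) and `π^+ : F_m^+ → I_m`
(with `π^+(ρ̄_{i,ℓ}) = ρ_{i,ℓ}`, `π^+(c̄_i) = 0`) intertwine the differentials
(`∂̄_m ∘ p^{𝔡+} = p^{𝔡+} ∘ ∂_m` and `∂_m ∘ π^+ = π^+ ∘ ∂̄_m`, so both are morphisms of
differential graded algebras, `p^{𝔡+}` preserving degrees), and `π^+ ∘ p^{𝔡+} = id` on `I_m`. -/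
theorem stabilization_morphisms_are_DGA_morphisms
    (m : ℕ) (hm : 0 < m) (d : ZMod m → ℕ+ → ℤ) (dd : ℤ)
    (hd : ∀ (i : ZMod m) (l r : ℕ+),
      Int.ModEq 2 (d i (l + r)) (d i l + d (i + ((l : ℕ) : ZMod m)) r + 1))
    (hdm : ∀ i : ZMod m, Odd (d i ⟨m, hm⟩))
    (D : FreeZAlg (IGen m) →ₗ[ℤ] FreeZAlg (IGen m))
    (hD1 : D 1 = 0)
    (hDgen : ∀ (i : ZMod m) (l : ℕ+),
      D (rho i l) =
        (if (l : ℕ) = m then 1 else 0) +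
          ∑ j ∈ Finset.Ico 1 (l : ℕ),
            (Int.negOnePow (d i j.toPNat' - 1) : ℤ) •
              (rho i j.toPNat' * rho (i + (j : ZMod m)) ((l : ℕ) - j).toPNat'))
    (hDLeib : ∀ x y : FreeMonoid (IGen m),
      D (word (x * y)) =
        D (word x) * word y +
          (Int.negOnePow (wdeg (idegree d) x) : ℤ) • (word x * D (word y)))
    (E : FreeZAlg (FGen m) →ₗ[ℤ] FreeZAlg (FGen m))
    (hE1 : E 1 = 0)
    (hErho : ∀ (i : ZMod m) (l : ℕ+),
      E (rhoBar i l) =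
        (if (l : ℕ) = m then 1 else 0) +
          ∑ j ∈ Finset.Ico 1 (l : ℕ),
            (Int.negOnePow (d i j.toPNat' - 1) : ℤ) •
              (rhoBar i j.toPNat' * rhoBar (i + (j : ZMod m)) ((l : ℕ) - j).toPNat'))
    (hEc1 : E (cBar (⟨0, hm⟩ : Fin m)) = 0)
    (hEck : ∀ k : Fin m, 0 < (k : ℕ) →
      E (cBar k) =
        (Int.negOnePow (fdegree d dd (Sum.inr k) - 1) : ℤ) •
          ∑ i ∈ Finset.univ.filter (fun i : Fin m => i < k),
            cBar i * rhoBar (((i : ℕ) + 1 : ℕ) : ZMod m) (((k : ℕ) - (i : ℕ)).toPNat'))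
    (hELeib : ∀ x y : FreeMonoid (FGen m),
      E (word (x * y)) =
        E (word x) * word y +
          (Int.negOnePow (wdeg (fdegree d dd) x) : ℤ) • (word x * E (word y)))
    (P : FreeZAlg (IGen m) →ₐ[ℤ] FreeZAlg (FGen m))
    (hP : ∀ (i : ZMod m) (l : ℕ+), P (rho i l) = rhoBar i l)
    (Q : FreeZAlg (FGen m) →ₐ[ℤ] FreeZAlg (IGen m))
    (hQrho : ∀ (i : ZMod m) (l : ℕ+), Q (rhoBar i l) = rho i l)
    (hQc : ∀ k : Fin m, Q (cBar k) = 0) :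
    (∀ x : FreeZAlg (IGen m), E (P x) = P (D x)) ∧
    (∀ y : FreeZAlg (FGen m), D (Q y) = Q (E y)) ∧
    (∀ x : FreeZAlg (IGen m), Q (P x) = x) ∧
    (∀ w : FreeMonoid (IGen m), ∀ u ∈ supp (P (word w)),
      wdeg (fdegree d dd) u = wdeg (idegree d) w) := by
  classical
  -- `P` on words
  have hPword : ∀ w : FreeMonoid (IGen m), P (word w) = word (FreeMonoid.map Sum.inl w) := by
    intro w
    induction w using FreeMonoid.recOn with
    | one => simp [word_one]
    | of_mul x xs ihx =>
      rw [word_mul, map_mul, ihx, map_mul, FreeMonoid.map_of, word_mul]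
      congr 1
      have hx : word (FreeMonoid.of x) = rho x.1 x.2 := rfl
      rw [hx, hP]
      rfl
  -- `P` intertwines the differentials on generators
  have hPDrho : ∀ (i : ZMod m) (l : ℕ+), P (D (rho i l)) = E (rhoBar i l) := by
    intro i l
    rw [hDgen, hErho, map_add, map_sum]
    congr 1
    · split <;> simp
    · refine Finset.sum_congr rfl fun j hj => ?_
      rw [map_smul, map_mul, hP, hP]
  -- `Q` intertwines the differentials on generators
  have hQErho : ∀ (i : ZMod m) (l : ℕ+), Q (E (rhoBar i l)) = D (rho i l) := by
    intro i l
    rw [hErho, hDgen, map_add, map_sum]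
    congr 1
    · split <;> simp
    · refine Finset.sum_congr rfl fun j hj => ?_
      rw [map_smul, map_mul, hQrho, hQrho]
  have hQEc : ∀ k : Fin m, Q (E (cBar k)) = 0 := by
    intro k
    rcases Nat.eq_zero_or_pos (k : ℕ) with h | h
    · have hk : k = (⟨0, hm⟩ : Fin m) := Fin.ext h
      rw [hk, hEc1, map_zero]
    · rw [hEck k h, map_smul, map_sum]
      simp [map_mul, hQc]
  -- key identity 1 on words
  have key1 : ∀ w : FreeMonoid (IGen m), E (P (word w)) = P (D (word w)) := by
    intro w
    induction w using FreeMonoid.recOn with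
    | one =>
      have h1 : word (1 : FreeMonoid (IGen m)) = 1 := word_one
      rw [h1, map_one, hE1, hD1, map_zero]
    | of_mul x xs ihx =>
      have e1 : P (word (FreeMonoid.of x * xs)) =
          word (FreeMonoid.of (Sum.inl x) * FreeMonoid.map Sum.inl xs) := by
        rw [hPword, map_mul, FreeMonoid.map_of]
      have e3 : E (word (FreeMonoid.map Sum.inl xs)) = P (D (word xs)) := by
        rw [← hPword]; exact ihx
      rw [e1, hELeib, e3, hDLeib, map_add, map_mul, map_smul, map_mul]
      have hx : word (FreeMonoid.of x) = rho x.1 x.2 := rfl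
      rw [hx, hPDrho, hP, hPword]
      have hsign : wdeg (fdegree d dd) (FreeMonoid.of (Sum.inl x : FGen m)) =
          wdeg (idegree d) (FreeMonoid.of x) := rfl
      rw [hsign]
      rfl
  -- key identity 2 on words
  have key2 : ∀ u : FreeMonoid (FGen m),
      (Q (word u) = 0 ∨ ∃ v : FreeMonoid (IGen m), Q (word u) = word v) ∧
        D (Q (word u)) = Q (E (word u)) := by
    intro u
    induction u using FreeMonoid.recOn with
    | one =>
      constructor
      · exact Or.inr ⟨1, by rw [word_one, map_one, word_one]⟩
      · rw [word_one, map_one, hD1, hE1, map_zero]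
    | of_mul g u' ihu =>
      obtain ⟨ih1, ih2⟩ := ihu
      have hsplit : Q (word (FreeMonoid.of g * u')) =
          Q (word (FreeMonoid.of g)) * Q (word u') := by
        rw [word_mul, map_mul]
      have hEsplit : Q (E (word (FreeMonoid.of g * u'))) =
          Q (E (word (FreeMonoid.of g))) * Q (word u') +
            (Int.negOnePow (wdeg (fdegree d dd) (FreeMonoid.of g)) : ℤ) •
              (Q (word (FreeMonoid.of g)) * Q (E (word u'))) := by
        rw [hELeib, map_add, map_mul, map_smul, map_mul]
      cases g with
      | inl x =>
        have hQg : Q (word (FreeMonoid.of (Sum.inl x : FGen m))) = rho x.1 x.2 := hQrho x.1 x.2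
        have hqe : Q (E (word (FreeMonoid.of (Sum.inl x : FGen m)))) =
            D (word (FreeMonoid.of x)) := hQErho x.1 x.2
        rcases ih1 with h0 | ⟨v, hv⟩
        · have hz : Q (word (FreeMonoid.of (Sum.inl x) * u')) = 0 := by
            rw [hsplit, h0, mul_zero]
          refine ⟨Or.inl hz, ?_⟩
          rw [hz, map_zero, hEsplit, ← ih2, h0, map_zero]
          simp
        · have hQu : Q (word (FreeMonoid.of (Sum.inl x) * u')) =
              word (FreeMonoid.of x * v) := by
            rw [hsplit, hQg, hv, word_mul]
            rfl
          refine ⟨Or.inr ⟨_, hQu⟩, ?_⟩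
          rw [hQu, hDLeib, hEsplit, hQg, ← ih2, hv, hqe]
          rfl
      | inr k =>
        have hQg : Q (word (FreeMonoid.of (Sum.inr k : FGen m))) = 0 := hQc k
        have hqe : Q (E (word (FreeMonoid.of (Sum.inr k : FGen m)))) = 0 := hQEc k
        have hz : Q (word (FreeMonoid.of (Sum.inr k) * u')) = 0 := by
          rw [hsplit, hQg, zero_mul]
        refine ⟨Or.inl hz, ?_⟩
        rw [hz, map_zero, hEsplit, hqe, hQg]
        simp
  -- key identity 3 on words
  have key3 : ∀ w : FreeMonoid (IGen m), Q (P (word w)) = word w := by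
    intro w
    induction w using FreeMonoid.recOn with
    | one => rw [word_one]; simp
    | of_mul x xs ihx =>
      rw [word_mul, map_mul, map_mul, ihx]
      congr 1
      have hx : word (FreeMonoid.of x) = rho x.1 x.2 := rfl
      rw [hx, hP, hQrho]
  -- single = smul of word
  have hsingleI : ∀ (a : FreeMonoid (IGen m)) (b : ℤ),
      (MonoidAlgebra.single a b : FreeZAlg (IGen m)) = b • word a := by
    intro a b
    rw [word_eq_single, MonoidAlgebra.smul_single', mul_one]
  have hsingleF : ∀ (a : FreeMonoid (FGen m)) (b : ℤ),
      (MonoidAlgebra.single a b : FreeZAlg (FGen m)) = b • word a := by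
    intro a b
    rw [word_eq_single, MonoidAlgebra.smul_single', mul_one]
  refine ⟨?_, ?_, ?_, ?_⟩
  · intro x
    induction x using MonoidAlgebra.induction_linear with
    | zero => simp
    | add f g hf hg => rw [map_add, map_add, map_add, map_add, hf, hg]
    | single a b =>
      rw [hsingleI, map_smul, map_smul, map_smul, map_smul, key1]
  · intro y
    induction y using MonoidAlgebra.induction_linear with
    | zero => simp
    | add f g hf hg => rw [map_add, map_add, map_add, map_add, hf, hg]
    | single a b =>
      rw [hsingleF, map_smul, map_smul, map_smul, map_smul, (key2 a).2]
  · intro x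
    induction x using MonoidAlgebra.induction_linear with
    | zero => simp
    | add f g hf hg => rw [map_add, map_add, hf, hg]
    | single a b =>
      rw [hsingleI, map_smul, map_smul, key3]
  · intro w u hu
    rw [hPword] at hu
    have hsupp : supp (word (FreeMonoid.map (Sum.inl : IGen m → FGen m) w)) =
        {FreeMonoid.map (Sum.inl : IGen m → FGen m) w} := by
      rw [word_eq_single]
      exact Finsupp.support_single_ne_zero _ one_ne_zero
    rw [hsupp, Finset.mem_singleton] at hu
    subst hu
    have hsum : wdeg (fdegree d dd) (FreeMonoid.map (Sum.inl : IGen m → FGen m) w) =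
        wdeg (idegree d) w := by
      simp only [wdeg, FreeMonoid.toList_map, List.map_map]
      rfl
    exact hsum
end
end

section
/- With the degrees g_1, …, g_m ∈ R defined from the potentials p_1, …, p_m by the case formulas (Gr2), and G(i,ℓ) := Σ_{j=0}^{ℓ−1} g_{i+j} + (ℓ−1)·1_R (indices read modulo m), the following hold: (1) G(i, ℓ+r) = G(i,ℓ) + G(i+ℓ,r) + 1_R for all i ∈ ℤ/m and ℓ, r ≥ 1 (the relation (Gr3) for the degrees of vertex generators); (2) Σ_{j=1}^{m} (g_j + 1_R) = 2·1_R; (3) G(i,m) = 1_R for every i ∈ ℤ/m; and more generally (4) G(i, km) = (2k−1)·1_R for every i ∈ ℤ/m and every integer k ≥ 1. -/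
open scoped BigOperators

noncomputable section

/-- The degree `G(i,ℓ) := Σ_{j=0}^{ℓ−1} g_{i+j} + (ℓ−1)·1_R` of the vertex generator
`v_{i,ℓ}` (indices read cyclically modulo `m`). -/
def Gdeg {R : Type} [AddCommGroup R] {m : ℕ} (one : R) (g : ZMod m → R)
    (i : ZMod m) (l : ℕ) : R :=
  (∑ j ∈ Finset.range l, g (i + (j : ZMod m))) + ((l : ℤ) - 1) • one

lemma sum_range_zmod_aux {R : Type} [AddCommGroup R] {m : ℕ} [NeZero m] (f : ZMod m → R) :
    ∑ j ∈ Finset.range m, f (j : ZMod m) = ∑ x : ZMod m, f x := by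
  refine Finset.sum_nbij' (fun j => (j : ZMod m)) (fun x => x.val) ?_ ?_ ?_ ?_ ?_
  · intro a _; exact Finset.mem_univ _
  · intro x _; exact Finset.mem_range.mpr (ZMod.val_lt x)
  · intro a ha; exact ZMod.val_cast_of_lt (Finset.mem_range.mp ha)
  · intro x _; exact ZMod.natCast_rightInverse x
  · intro a _; rfl

lemma Gdeg_add_aux {R : Type} [AddCommGroup R] {m : ℕ} (one : R) (g : ZMod m → R)
    (i : ZMod m) (l r : ℕ) :
    Gdeg one g i (l + r) = Gdeg one g i l + Gdeg one g (i + (l : ZMod m)) r + one := by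
  unfold Gdeg
  rw [Finset.sum_range_add]
  have h1 : ∀ x : ℕ, g (i + ((l + x : ℕ) : ZMod m)) = g (i + (l : ZMod m) + (x : ZMod m)) := by
    intro x; push_cast; rw [add_assoc]
  rw [Finset.sum_congr rfl (fun x _ => h1 x)]
  have h2 : ((l + r : ℕ) : ℤ) - 1 = (((l : ℤ) - 1) + ((r : ℤ) - 1)) + 1 := by push_cast; ring
  rw [h2, add_smul, add_smul, one_smul]
  abel

/-- With the degrees `g_1, …, g_m ∈ R` defined from the potentials
`p_1, …, p_m` by the case formulas (Gr2), and
`G(i,ℓ) := Σ_{j=0}^{ℓ−1} g_{i+j} + (ℓ−1)·1_R`, one has: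
(1) `G(i,ℓ+r) = G(i,ℓ) + G(i+ℓ,r) + 1_R` for all `i` and `ℓ, r ≥ 1` (the relation (Gr3));
(2) `Σ_{j=1}^m (g_j + 1_R) = 2·1_R`;
(3) `G(i,m) = 1_R` for every `i`; and more generally
(4) `G(i,km) = (2k−1)·1_R` for every `i` and every `k ≥ 1`.
Here `m = a + b ≥ 1`, the `1`-based index `i ∈ {1,…,m}` is read as the residue
`(i : ZMod (a+b))`, and the three mutually exclusive cases of (Gr2) are the hypotheses
`hab` (`a ≥ 1` and `b ≥ 1`), `ha0` (`a = 0`) and `hb0` (`b = 0`). -/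
theorem vertex_generator_degree_relations
    (R : Type) [AddCommGroup R] (one : R)
    (a b : ℕ) (hm : 0 < a + b)
    (p g : ZMod (a + b) → R)
    (hab : 1 ≤ a → 1 ≤ b →
      (∀ i : ℕ, 1 ≤ i → i ≤ a + b → i ≠ a → i ≠ a + b →
          g (i : ZMod (a + b)) =
            p (i : ZMod (a + b)) - p ((i + 1 : ℕ) : ZMod (a + b)) - one) ∧
        g (a : ZMod (a + b)) = p (a : ZMod (a + b)) - p ((a + 1 : ℕ) : ZMod (a + b)) ∧
        g ((a + b : ℕ) : ZMod (a + b)) =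
          p ((a + b : ℕ) : ZMod (a + b)) - p ((1 : ℕ) : ZMod (a + b)))
    (ha0 : a = 0 →
      (∀ i : ℕ, 1 ≤ i → i < a + b →
          g (i : ZMod (a + b)) =
            p (i : ZMod (a + b)) - p ((i + 1 : ℕ) : ZMod (a + b)) - one) ∧
        g ((a + b : ℕ) : ZMod (a + b)) =
          p ((a + b : ℕ) : ZMod (a + b)) - p ((1 : ℕ) : ZMod (a + b)) + one)
    (hb0 : b = 0 →
      (∀ i : ℕ, 1 ≤ i → i < a + b →
          g (i : ZMod (a + b)) =
            p (i : ZMod (a + b)) - p ((i + 1 : ℕ) : ZMod (a + b)) - one) ∧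
        g ((a + b : ℕ) : ZMod (a + b)) =
          p ((a + b : ℕ) : ZMod (a + b)) - p ((1 : ℕ) : ZMod (a + b)) + one) :
    (∀ (i : ZMod (a + b)) (l r : ℕ), 1 ≤ l → 1 ≤ r →
        Gdeg one g i (l + r) = Gdeg one g i l + Gdeg one g (i + (l : ZMod (a + b))) r + one) ∧
      (∑ j ∈ Finset.range (a + b), (g ((j + 1 : ℕ) : ZMod (a + b)) + one)) = (2 : ℤ) • one ∧
      (∀ i : ZMod (a + b), Gdeg one g i (a + b) = one) ∧
      (∀ (i : ZMod (a + b)) (k : ℕ), 1 ≤ k →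
        Gdeg one g i (k * (a + b)) = (2 * (k : ℤ) - 1) • one) := by
  haveI : NeZero (a + b) := ⟨hm.ne'⟩
  have hcyc : ((a + b + 1 : ℕ) : ZMod (a + b)) = ((1 : ℕ) : ZMod (a + b)) := by
    rw [Nat.cast_add (R := ZMod (a + b)) (a + b) 1, ZMod.natCast_self, zero_add]
  have htel : ∑ j ∈ Finset.range (a + b),
      (p ((j + 1 : ℕ) : ZMod (a + b)) - p ((j + 1 + 1 : ℕ) : ZMod (a + b))) = 0 := by
    have h := Finset.sum_range_sub' (f := fun j => p ((j + 1 : ℕ) : ZMod (a + b))) (n := a + b)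
    rw [h, hcyc]
    simp
  -- uniform description of g with a correction index t
  obtain ⟨t, ht, hg⟩ : ∃ t, t < a + b ∧ ∀ j < a + b,
      g ((j + 1 : ℕ) : ZMod (a + b)) =
        (p ((j + 1 : ℕ) : ZMod (a + b)) - p ((j + 1 + 1 : ℕ) : ZMod (a + b))) +
          (-one + (if j = t then one else 0) + (if j = a + b - 1 then one else 0)) := by
    have hedge : (a = 0 ∨ b = 0) → ∃ t, t < a + b ∧ ∀ j < a + b,
        g ((j + 1 : ℕ) : ZMod (a + b)) =
          (p ((j + 1 : ℕ) : ZMod (a + b)) - p ((j + 1 + 1 : ℕ) : ZMod (a + b))) +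
            (-one + (if j = t then one else 0) + (if j = a + b - 1 then one else 0)) := by
      intro hc
      obtain ⟨h1, h2⟩ : (∀ i : ℕ, 1 ≤ i → i < a + b →
          g (i : ZMod (a + b)) = p (i : ZMod (a + b)) - p ((i + 1 : ℕ) : ZMod (a + b)) - one) ∧
          g ((a + b : ℕ) : ZMod (a + b)) =
            p ((a + b : ℕ) : ZMod (a + b)) - p ((1 : ℕ) : ZMod (a + b)) + one := by
        rcases hc with hc | hc
        · exact ha0 hc
        · exact hb0 hc
      refine ⟨a + b - 1, by omega, ?_⟩
      intro j hj
      by_cases hjm : j = a + b - 1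
      · subst hjm
        have hj1 : a + b - 1 + 1 = a + b := by omega
        rw [if_pos rfl, hj1, hcyc, h2]
        abel
      · rw [if_neg hjm, h1 (j + 1) (by omega) (by omega)]
        abel
    rcases Nat.eq_zero_or_pos a with ha | ha
    · exact hedge (Or.inl ha)
    rcases Nat.eq_zero_or_pos b with hb | hb
    · exact hedge (Or.inr hb)
    obtain ⟨h1, h2, h3⟩ := hab ha hb
    refine ⟨a - 1, by omega, ?_⟩
    intro j hj
    by_cases hja : j = a - 1
    · subst hja
      have hj1 : a - 1 + 1 = a := by omega
      have hne : a - 1 ≠ a + b - 1 := by omega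
      rw [if_pos rfl, if_neg hne, hj1, h2]
      abel
    · by_cases hjm : j = a + b - 1
      · subst hjm
        have hj1 : a + b - 1 + 1 = a + b := by omega
        rw [if_neg hja, if_pos rfl, hj1, hcyc, h3]
        abel
      · rw [if_neg hja, if_neg hjm,
          h1 (j + 1) (by omega) (by omega) (by omega) (by omega)]
        abel
  -- the total sum of the degrees
  have hsum : ∑ j ∈ Finset.range (a + b), g ((j + 1 : ℕ) : ZMod (a + b))
      = (2 - ((a + b : ℕ) : ℤ)) • one := by
    rw [Finset.sum_congr rfl (fun j hj => hg j (Finset.mem_range.mp hj))]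
    rw [Finset.sum_add_distrib, htel, Finset.sum_add_distrib, Finset.sum_add_distrib]
    rw [Finset.sum_const, Finset.card_range]
    rw [Finset.sum_ite_eq' (Finset.range (a + b)) t (fun _ => one),
      Finset.sum_ite_eq' (Finset.range (a + b)) (a + b - 1) (fun _ => one)]
    rw [if_pos (Finset.mem_range.mpr ht), if_pos (Finset.mem_range.mpr (by omega))]
    rw [sub_smul, smul_neg, two_zsmul, ← natCast_zsmul]
    abel
  have huniv : ∑ x : ZMod (a + b), g x = (2 - ((a + b : ℕ) : ℤ)) • one := by
    rw [← hsum]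
    have h1 : ∀ j : ℕ, g ((j + 1 : ℕ) : ZMod (a + b)) = g ((j : ZMod (a + b)) + 1) := by
      intro j; push_cast; ring_nf
    rw [Finset.sum_congr rfl (fun j _ => h1 j)]
    rw [sum_range_zmod_aux (f := fun x => g (x + 1))]
    exact (Fintype.sum_equiv (Equiv.addRight (1 : ZMod (a + b))) _ _ (fun x => rfl)).symm
  have part3 : ∀ i : ZMod (a + b), Gdeg one g i (a + b) = one := by
    intro i
    unfold Gdeg
    rw [sum_range_zmod_aux (f := fun x => g (i + x))]
    have he : ∑ x : ZMod (a + b), g (i + x) = ∑ x : ZMod (a + b), g x :=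
      Fintype.sum_equiv (Equiv.addLeft i) _ _ (fun x => rfl)
    rw [he, huniv, ← add_smul]
    have h2 : (2 - ((a + b : ℕ) : ℤ)) + (((a + b : ℕ) : ℤ) - 1) = 1 := by ring
    rw [h2, one_smul]
  refine ⟨fun i l r _ _ => Gdeg_add_aux one g i l r, ?_, part3, ?_⟩
  · rw [Finset.sum_add_distrib, hsum, Finset.sum_const, Finset.card_range]
    rw [← natCast_zsmul one (a + b), ← add_smul]
    norm_num
  · intro i k hk
    induction k, hk using Nat.le_induction with
    | base =>
      rw [one_mul]
      simpa using part3 i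
    | succ n hn ih =>
      have hmul : (n + 1) * (a + b) = n * (a + b) + (a + b) := by ring
      rw [hmul, Gdeg_add_aux, ih, part3]
      have h : (2 * ((n : ℤ) + 1) - 1) = (2 * (n : ℤ) - 1) + 1 + 1 := by ring
      push_cast
      rw [h, add_smul, add_smul, one_smul]
end
end
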